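/- Let X_n = {x_1, ..., x_n} be nested designs obtained from a point sequence in a compact X ⊂ ℝ^d, and suppose that for some r and n ≥ 2 one has MR(X_n) ≤ r. Then SR(X_{n+1}) ≤ (r/2)·SR(X_n). Consequently, if MR(X_n) ≤ r < 2 for all n ≥ n_0, then SR(X_n) decreases to zero exponentially fast as n → ∞. -/

import Mathlib

/-!
The new point `xₙ` lies in `S`, so its distance to the nearest point of `Xₙ` is at most
`CR(Xₙ) ≤ r · SR(Xₙ)`; that nearest point and `xₙ` are two distinct points of `Xₙ₊₁`, so
`2 · SR(Xₙ₊₁)` is at most this distance. Iterating the one-step contraction gives geometric decay.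
-/

open Metric Set MeasureTheory

/-- Distance from a point `x` to the nearest point of the design `D`. -/
noncomputable def minDist {E : Type*} [NormedAddCommGroup E] (D : Finset E) (x : E) : ℝ :=
  sInf ((fun p => dist x p) '' (D : Set E))

/-- Fill distance (covering radius) of the design `D` for the set `A`:
`CR_A(D) = sup_{x ∈ A} min_{p ∈ D} ‖x - p‖`. -/
noncomputable def fillDist {E : Type*} [NormedAddCommGroup E] (A : Set E) (D : Finset E) : ℝ :=
  sSup ((fun x => minDist D x) '' A)

/-- Separation radius of the design `D`:
`SR(D) = (1/2) min_{p ≠ q ∈ D} ‖p - q‖`. -/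
noncomputable def sepRad {E : Type*} [NormedAddCommGroup E] (D : Finset E) : ℝ :=
  (1 / 2) * sInf ((fun p : E × E => dist p.1 p.2) '' {p | p.1 ∈ D ∧ p.2 ∈ D ∧ p.1 ≠ p.2})

/-- Mesh-ratio of the design `D` for the set `A`: `MR(D) = CR_A(D) / SR(D)`. -/
noncomputable def meshRatio {E : Type*} [NormedAddCommGroup E] (A : Set E) (D : Finset E) : ℝ :=
  fillDist A D / sepRad D

/-- The nested design consisting of the first `n` points of the sequence `x`. -/
noncomputable def design {E : Type*} (x : ℕ → E) (n : ℕ) : Finset E :=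
  letI := Classical.decEq E
  (Finset.range n).image x

section Design

variable {α : Type*} {x : ℕ → α} {n : ℕ}

theorem mem_design {p : α} : p ∈ design x n ↔ ∃ k < n, x k = p := by
  simp [design]

theorem mem_design_iff (hinj : Function.Injective x) {k : ℕ} : x k ∈ design x n ↔ k < n := by
  simp [mem_design, hinj.eq_iff]

end Design

section Distances

variable {E : Type*} [NormedAddCommGroup E]

theorem minDist_le_dist {D : Finset E} {p : E} (hp : p ∈ D) (z : E) :
    minDist D z ≤ dist z p :=
  csInf_le ⟨0, by rintro _ ⟨q, _, rfl⟩; exact dist_nonneg⟩ ⟨p, hp, rfl⟩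

theorem exists_minDist_eq {D : Finset E} (hD : D.Nonempty) (z : E) :
    ∃ p ∈ D, minDist D z = dist z p := by
  obtain ⟨p, hp, h⟩ :=
    ((Finset.coe_nonempty.2 hD).image (dist z)).csInf_mem (D.finite_toSet.image (dist z))
  exact ⟨p, hp, h.symm⟩

theorem minDist_le_fillDist {S : Set E} (hS : Bornology.IsBounded S) {D : Finset E}
    (hD : D.Nonempty) {z : E} (hz : z ∈ S) : minDist D z ≤ fillDist S D := by
  obtain ⟨p, hp⟩ := hD
  obtain ⟨R, hR⟩ := hS.subset_closedBall p
  refine le_csSup ⟨R, ?_⟩ ⟨z, hz, rfl⟩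
  rintro _ ⟨w, hw, rfl⟩
  exact (minDist_le_dist hp w).trans (mem_closedBall.1 (hR hw))

theorem sepRad_le_half_dist {D : Finset E} {p q : E} (hp : p ∈ D) (hq : q ∈ D) (hpq : p ≠ q) :
    sepRad D ≤ dist p q / 2 := by
  have h : sInf ((fun p : E × E => dist p.1 p.2) '' {p | p.1 ∈ D ∧ p.2 ∈ D ∧ p.1 ≠ p.2}) ≤
      dist p q :=
    csInf_le ⟨0, by rintro _ ⟨_, _, rfl⟩; exact dist_nonneg⟩ ⟨(p, q), ⟨hp, hq, hpq⟩, rfl⟩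
  rw [sepRad]
  linarith

theorem sepRad_pos {D : Finset E} {p q : E} (hp : p ∈ D) (hq : q ∈ D) (hpq : p ≠ q) :
    0 < sepRad D := by
  set dists := (fun p : E × E => dist p.1 p.2) '' {p | p.1 ∈ D ∧ p.2 ∈ D ∧ p.1 ≠ p.2}
  have hfin : dists.Finite :=
    ((D.finite_toSet.prod D.finite_toSet).image _).subset
      (image_mono fun _ h => ⟨h.1, h.2.1⟩)
  have hne : dists.Nonempty := ⟨_, (p, q), ⟨hp, hq, hpq⟩, rfl⟩
  obtain ⟨⟨a, b⟩, ⟨-, -, hab⟩, h⟩ := hne.csInf_mem hfin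
  rw [sepRad, ← h]
  exact mul_pos one_half_pos (dist_pos.2 hab)

end Distances

section NestedDesigns

variable {E : Type*} [NormedAddCommGroup E] {x : ℕ → E} {n : ℕ}

theorem sepRad_design_pos (hinj : Function.Injective x) (hn : 2 ≤ n) :
    0 < sepRad (design x n) :=
  sepRad_pos ((mem_design_iff hinj).2 (by omega : 0 < n))
    ((mem_design_iff hinj).2 (by omega : 1 < n)) (hinj.ne zero_ne_one)

theorem sepRad_design_succ_le_half_minDist (hinj : Function.Injective x) (hn : 1 ≤ n) :
    sepRad (design x (n + 1)) ≤ minDist (design x n) (x n) / 2 := by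
  obtain ⟨p, hp, hmin⟩ := exists_minDist_eq ⟨x 0, (mem_design_iff hinj).2 hn⟩ (x n)
  obtain ⟨k, hk, rfl⟩ := mem_design.1 hp
  rw [hmin]
  exact sepRad_le_half_dist ((mem_design_iff hinj).2 n.lt_succ_self)
    ((mem_design_iff hinj).2 (hk.trans n.lt_succ_self)) (hinj.ne (by omega))

theorem sepRad_design_succ_le {S : Set E} (hS : Bornology.IsBounded S)
    (hinj : Function.Injective x) (hxn : x n ∈ S) (hn : 2 ≤ n) {r : ℝ}
    (hr : meshRatio S (design x n) ≤ r) :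
    sepRad (design x (n + 1)) ≤ r / 2 * sepRad (design x n) := by
  have hfill : fillDist S (design x n) ≤ r * sepRad (design x n) :=
    (div_le_iff₀ (sepRad_design_pos hinj hn)).1 hr
  have hmin : minDist (design x n) (x n) ≤ fillDist S (design x n) :=
    minDist_le_fillDist hS ⟨x 0, (mem_design_iff hinj).2 (by omega)⟩ hxn
  calc sepRad (design x (n + 1)) ≤ minDist (design x n) (x n) / 2 :=
        sepRad_design_succ_le_half_minDist hinj (by omega)
    _ ≤ r / 2 * sepRad (design x n) := by linarith

end NestedDesigns

theorem exists_le_mul_pow_of_succ_le_mul {u : ℕ → ℝ} {q : ℝ} (hq : 0 < q) {n₀ : ℕ}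
    (hu : 0 < u n₀) (h : ∀ n, n₀ ≤ n → u (n + 1) ≤ q * u n) :
    ∃ C : ℝ, 0 < C ∧ ∀ n, n₀ ≤ n → u n ≤ C * q ^ n := by
  refine ⟨u n₀ / q ^ n₀, by positivity, fun n hn => ?_⟩
  obtain ⟨k, rfl⟩ := Nat.exists_eq_add_of_le hn
  calc u (n₀ + k) ≤ q ^ k * u n₀ :=
        le_geom (u := fun k => u (n₀ + k)) hq.le k fun j _ => h (n₀ + j) (by omega)
    _ = u n₀ / q ^ n₀ * q ^ (n₀ + k) := by field_simp; ring

theorem statement18_general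
    {E : Type*} [NormedAddCommGroup E]
    (S : Set E) (hS : IsCompact S)
    (x : ℕ → E) (hinj : Function.Injective x) (hmem : ∀ k, x k ∈ S) :
    (∀ r : ℝ, ∀ n : ℕ, 2 ≤ n → meshRatio S (design x n) ≤ r →
      sepRad (design x (n + 1)) ≤ (r / 2) * sepRad (design x n)) ∧
    (∀ r : ℝ, r < 2 → ∀ n₀ : ℕ, 2 ≤ n₀ →
      (∀ n : ℕ, n₀ ≤ n → meshRatio S (design x n) ≤ r) →
      ∃ C : ℝ, 0 < C ∧ ∀ n : ℕ, n₀ ≤ n → sepRad (design x n) ≤ C * (r / 2) ^ n) := by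
  have step : ∀ r : ℝ, ∀ n : ℕ, 2 ≤ n → meshRatio S (design x n) ≤ r →
      sepRad (design x (n + 1)) ≤ (r / 2) * sepRad (design x n) :=
    fun r n hn hr => sepRad_design_succ_le hS.isBounded hinj (hmem n) hn hr
  refine ⟨step, fun r _ n₀ hn₀ hmesh => ?_⟩
  have hsep : ∀ n, 2 ≤ n → 0 < sepRad (design x n) := fun n hn => sepRad_design_pos hinj hn
  -- `r > 0` is forced: the one-step bound at `n₀` has positive separation radii on both sides.
  have hq : 0 < r / 2 := pos_of_mul_pos_left
    ((hsep (n₀ + 1) (by omega)).trans_le (step r n₀ hn₀ (hmesh n₀ le_rfl)))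
    (hsep n₀ hn₀).le
  exact exists_le_mul_pow_of_succ_le_mul hq (hsep n₀ hn₀)
    fun n hn => step r n (by omega) (hmesh n hn)

/-- Let `Xₙ` be the nested designs of a point sequence in a compact
`S ⊆ ℝ^d`. If `MR(Xₙ) ≤ r` for some `n ≥ 2`, then `SR(X_{n+1}) ≤ (r/2)·SR(Xₙ)`.
Consequently, if `MR(Xₙ) ≤ r < 2` for all `n ≥ n₀`, then `SR(Xₙ)` decreases to zero
exponentially fast: `SR(Xₙ) ≤ C·(r/2)^n` for some constant `C > 0`. -/
theorem statement18 {d : ℕ} (hd : 1 ≤ d)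
    {E : Type*} [NormedAddCommGroup E] [NormedSpace ℝ E] [FiniteDimensional ℝ E]
    (hdim : Module.finrank ℝ E = d)
    (S : Set E) (hS : IsCompact S)
    (x : ℕ → E) (hinj : Function.Injective x) (hmem : ∀ k, x k ∈ S) :
    (∀ r : ℝ, ∀ n : ℕ, 2 ≤ n → meshRatio S (design x n) ≤ r →
      sepRad (design x (n + 1)) ≤ (r / 2) * sepRad (design x n)) ∧
    (∀ r : ℝ, r < 2 → ∀ n₀ : ℕ, 2 ≤ n₀ →
      (∀ n : ℕ, n₀ ≤ n → meshRatio S (design x n) ≤ r) →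
      ∃ C : ℝ, 0 < C ∧ ∀ n : ℕ, n₀ ≤ n → sepRad (design x n) ≤ C * (r / 2) ^ n) :=
  statement18_general S hS x hinj hmem
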